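/- Let V be a 6-dimensional real vector space and ω an alternating 3-form on V with Δ(ω) = {0}. If J and J̃ are complex structures on V such that ω is pure with respect to both J and J̃, then J̃ = J or J̃ = −J. -/
import Mathlib


open scoped TensorProduct

/-- The wedge product of real-valued alternating forms
(antisymmetrized shuffle-sum convention, via `AlternatingMap.domCoprod`). -/
noncomputable def wedge {V : Type*} [AddCommGroup V] [Module ℝ V] {p q : ℕ}
    (α : V [⋀^Fin p]→ₗ[ℝ] ℝ) (β : V [⋀^Fin q]→ₗ[ℝ] ℝ) : V [⋀^Fin (p + q)]→ₗ[ℝ] ℝ :=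
  ((LinearMap.mul' ℝ ℝ).compAlternatingMap (α.domCoprod β)).domDomCongr finSumFinEquiv

/-- The interior product `ι_v ω = ω(v, ·, …, ·)`. -/
noncomputable def iota {V : Type*} [AddCommGroup V] [Module ℝ V] {n : ℕ}
    (v : V) (ω : V [⋀^Fin (n + 1)]→ₗ[ℝ] ℝ) : V [⋀^Fin n]→ₗ[ℝ] ℝ :=
  ω.curryLeft v

/-- `Δ(ω) = {v ∈ V : (ι_v ω) ∧ (ι_v ω) = 0}` for a 3-form `ω`. -/
noncomputable def Delta {V : Type*} [AddCommGroup V] [Module ℝ V]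
    (ω : V [⋀^Fin 3]→ₗ[ℝ] ℝ) : Set V :=
  {v | wedge (iota v ω) (iota v ω) = 0}

/-- A form is multisymplectic iff `v ↦ ι_v ω` is injective. -/
noncomputable def Multisymplectic {V : Type*} [AddCommGroup V] [Module ℝ V] {n : ℕ}
    (ω : V [⋀^Fin (n + 1)]→ₗ[ℝ] ℝ) : Prop :=
  Function.Injective fun v : V => iota v ω

-- ===================== auxiliary development =====================

set_option linter.unusedSectionVars false
set_option maxHeartbeats 4000000

open Module

section CMod
variable {V : Type*} [AddCommGroup V] [Module ℝ V]

theorem Jsq_apply (J : V →ₗ[ℝ] V) (hJ : J ∘ₗ J = -LinearMap.id) (v : V) : J (J v) = -v := by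
  have := LinearMap.ext_iff.1 hJ v
  simpa using this

/-- The complex module structure induced by a complex structure `J`. -/
noncomputable def cmod (J : V →ₗ[ℝ] V) (hJ : J ∘ₗ J = -LinearMap.id) : Module ℂ V where
  smul c v := c.re • v + c.im • J v
  one_smul v := by
    show (1:ℂ).re • v + (1:ℂ).im • J v = v
    simp
  mul_smul c d v := by
    show (c*d).re • v + (c*d).im • J v
      = c.re • (d.re • v + d.im • J v) + c.im • J (d.re • v + d.im • J v)
    simp only [Complex.mul_re, Complex.mul_im, map_add, map_smul, Jsq_apply J hJ,
      smul_add, smul_smul, sub_smul, add_smul, smul_neg]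
    abel
  smul_zero c := by
    show c.re • (0:V) + c.im • J 0 = 0
    simp
  smul_add c u v := by
    show c.re • (u + v) + c.im • J (u + v) = (c.re • u + c.im • J u) + (c.re • v + c.im • J v)
    simp only [map_add, smul_add]
    abel
  add_smul c d v := by
    show (c+d).re • v + (c+d).im • J v = (c.re • v + c.im • J v) + (d.re • v + d.im • J v)
    simp only [Complex.add_re, Complex.add_im, add_smul]
    abel
  zero_smul v := by
    show (0:ℂ).re • v + (0:ℂ).im • J v = 0
    simp

theorem cmod_smul (J : V →ₗ[ℝ] V) (hJ : J ∘ₗ J = -LinearMap.id) (c : ℂ) (v : V) :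
    (letI := cmod J hJ; c • v) = c.re • v + c.im • J v := rfl

theorem cmod_tower (J : V →ₗ[ℝ] V) (hJ : J ∘ₗ J = -LinearMap.id) :
    letI := cmod J hJ; IsScalarTower ℝ ℂ V := by
  letI := cmod J hJ
  refine ⟨fun r c v => ?_⟩
  show ((r • c).re) • v + ((r • c).im) • J v = r • (c.re • v + c.im • J v)
  simp [Complex.smul_re, Complex.smul_im, smul_add, smul_smul]

theorem cmod_finrank [FiniteDimensional ℝ V] (hV : finrank ℝ V = 6)
    (J : V →ₗ[ℝ] V) (hJ : J ∘ₗ J = -LinearMap.id) :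
    letI := cmod J hJ; finrank ℂ V = 3 := by
  letI := cmod J hJ
  letI := cmod_tower J hJ
  letI : Module.Finite ℂ V := Module.Finite.of_restrictScalars_finite ℝ ℂ V
  have h := Module.finrank_mul_finrank ℝ ℂ V
  rw [Complex.finrank_real_complex, hV] at h
  omega

theorem cmod_findim [FiniteDimensional ℝ V] (J : V →ₗ[ℝ] V) (hJ : J ∘ₗ J = -LinearMap.id) :
    letI := cmod J hJ; FiniteDimensional ℂ V := by
  letI := cmod J hJ
  letI := cmod_tower J hJ
  exact Module.Finite.of_restrictScalars_finite ℝ ℂ V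

end CMod

section OmegaHelpers
variable {V : Type*} [AddCommGroup V] [Module ℝ V] (ω : V [⋀^Fin 3]→ₗ[ℝ] ℝ)

theorem upd0 (a b c x : V) : Function.update ![a,b,c] 0 x = ![x,b,c] := by
  funext i; fin_cases i <;> simp [Function.update_apply]

theorem upd1 (a b c x : V) : Function.update ![a,b,c] 1 x = ![a,x,c] := by
  funext i; fin_cases i <;> simp [Function.update_apply]

theorem upd2 (a b c x : V) : Function.update ![a,b,c] 2 x = ![a,b,x] := by
  funext i; fin_cases i <;> simp [Function.update_apply]

theorem om_add0 (x x' b c : V) : ω ![x + x', b, c] = ω ![x,b,c] + ω ![x',b,c] := by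
  have h := ω.toMultilinearMap.map_update_add ![x,b,c] 0 x x'
  simpa [upd0] using h

theorem om_add1 (a x x' c : V) : ω ![a, x + x', c] = ω ![a,x,c] + ω ![a,x',c] := by
  have h := ω.toMultilinearMap.map_update_add ![a,x,c] 1 x x'
  simpa [upd1] using h

theorem om_add2 (a b x x' : V) : ω ![a, b, x + x'] = ω ![a,b,x] + ω ![a,b,x'] := by
  have h := ω.toMultilinearMap.map_update_add ![a,b,x] 2 x x'
  simpa [upd2] using h

theorem om_smul0 (r : ℝ) (x b c : V) : ω ![r • x, b, c] = r * ω ![x,b,c] := by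
  have h := ω.toMultilinearMap.map_update_smul ![x,b,c] 0 r x
  simpa [upd0] using h

theorem om_smul1 (r : ℝ) (a x c : V) : ω ![a, r • x, c] = r * ω ![a,x,c] := by
  have h := ω.toMultilinearMap.map_update_smul ![a,x,c] 1 r x
  simpa [upd1] using h

theorem om_smul2 (r : ℝ) (a b x : V) : ω ![a, b, r • x] = r * ω ![a,b,x] := by
  have h := ω.toMultilinearMap.map_update_smul ![a,b,x] 2 r x
  simpa [upd2] using h

theorem om_eq01 (a c : V) : ω ![a, a, c] = 0 :=
  ω.map_eq_zero_of_eq _ (by simp : (![a,a,c] : Fin 3 → V) 0 = ![a,a,c] 1) (by decide)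

theorem om_eq02 (a b : V) : ω ![a, b, a] = 0 :=
  ω.map_eq_zero_of_eq (i := 0) (j := 2) _ (by simp) (by decide)

theorem om_eq12 (a b : V) : ω ![a, b, b] = 0 :=
  ω.map_eq_zero_of_eq (i := 1) (j := 2) _ (by simp) (by decide)

theorem om_swap01 (a b c : V) : ω ![b, a, c] = - ω ![a, b, c] := by
  have h := ω.map_swap ![a,b,c] (by decide : (0 : Fin 3) ≠ 1)
  have e : (![a,b,c] : Fin 3 → V) ∘ (Equiv.swap (0:Fin 3) 1) = ![b,a,c] := by
    funext i; fin_cases i <;> simp [Equiv.swap_apply_def]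
  rwa [e] at h

theorem om_swap12 (a b c : V) : ω ![a, c, b] = - ω ![a, b, c] := by
  have h := ω.map_swap ![a,b,c] (by decide : (1 : Fin 3) ≠ 2)
  have e : (![a,b,c] : Fin 3 → V) ∘ (Equiv.swap (1:Fin 3) 2) = ![a,c,b] := by
    funext i; fin_cases i <;> simp [Equiv.swap_apply_def]
  rwa [e] at h

theorem om_swap02 (a b c : V) : ω ![c, b, a] = - ω ![a, b, c] := by
  have h := ω.map_swap ![a,b,c] (by decide : (0 : Fin 3) ≠ 2)
  have e : (![a,b,c] : Fin 3 → V) ∘ (Equiv.swap (0:Fin 3) 2) = ![c,b,a] := by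
    funext i; fin_cases i <;> simp [Equiv.swap_apply_def]
  rwa [e] at h

end OmegaHelpers

section D
variable {V : Type*} [AddCommGroup V] [Module ℝ V]

theorem wedge_zero_zero : wedge (0 : V [⋀^Fin 2]→ₗ[ℝ] ℝ) (0 : V [⋀^Fin 2]→ₗ[ℝ] ℝ) = 0 := by
  have h1 : (0 : V [⋀^Fin 2]→ₗ[ℝ] ℝ).domCoprod (0 : V [⋀^Fin 2]→ₗ[ℝ] ℝ) = 0 := by
    rw [← AlternatingMap.domCoprod'_apply, TensorProduct.zero_tmul, map_zero]
  ext m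
  simp [wedge, h1]

theorem iota_apply (ω : V [⋀^Fin 3]→ₗ[ℝ] ℝ) (v x y : V) :
    iota v ω ![x, y] = ω ![v, x, y] := by
  simp [iota]

theorem exists_nonzero_val (ω : V [⋀^Fin 3]→ₗ[ℝ] ℝ) (hΔ : Delta ω = {0})
    (v : V) (hv : v ≠ 0) : ∃ x y, ω ![v, x, y] ≠ 0 := by
  by_contra h
  push_neg at h
  have hiz : iota v ω = 0 := by
    apply AlternatingMap.ext
    intro m
    have hm : ![m 0, m 1] = m := by
      funext i; fin_cases i <;> rfl
    have := h (m 0) (m 1)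
    rw [← iota_apply, hm] at this
    simpa using this
  have hmem : v ∈ Delta ω := by
    show wedge (iota v ω) (iota v ω) = 0
    rw [hiz]; exact wedge_zero_zero
  rw [hΔ] at hmem
  exact hv hmem
end D

noncomputable section OmDef
open Complex
variable {V : Type*} [AddCommGroup V] [Module ℝ V]

/-- The (3,0)-form associated to a pure 3-form. -/
def Om (ω : V [⋀^Fin 3]→ₗ[ℝ] ℝ) (J : V →ₗ[ℝ] V) (v x y : V) : ℂ :=
  (ω ![v,x,y] : ℂ) - (ω ![J v,x,y] : ℂ) * I

variable (ω : V [⋀^Fin 3]→ₗ[ℝ] ℝ) (J : V →ₗ[ℝ] V) (hJ : J ∘ₗ J = -LinearMap.id)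
  (hp : ∀ v₁ v₂ v₃ : V,
      ω ![J v₁, v₂, v₃] = ω ![v₁, J v₂, v₃] ∧ ω ![v₁, J v₂, v₃] = ω ![v₁, v₂, J v₃])

theorem Om_re (v x y : V) : (Om ω J v x y).re = ω ![v,x,y] := by simp [Om]

theorem Om_add0 (v v' x y : V) : Om ω J (v + v') x y = Om ω J v x y + Om ω J v' x y := by
  simp [Om, om_add0]; push_cast; ring

theorem Om_add1 (v x x' y : V) : Om ω J v (x + x') y = Om ω J v x y + Om ω J v x' y := by
  simp [Om, om_add1]; push_cast; ring

theorem Om_add2 (v x y y' : V) : Om ω J v x (y + y') = Om ω J v x y + Om ω J v x y' := by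
  simp [Om, om_add2]; push_cast; ring

theorem Om_smulR0 (r : ℝ) (v x y : V) : Om ω J (r • v) x y = (r:ℂ) * Om ω J v x y := by
  simp [Om, om_smul0]; push_cast; ring

theorem Om_smulR1 (r : ℝ) (v x y : V) : Om ω J v (r • x) y = (r:ℂ) * Om ω J v x y := by
  simp [Om, om_smul1]; push_cast; ring

theorem Om_smulR2 (r : ℝ) (v x y : V) : Om ω J v x (r • y) = (r:ℂ) * Om ω J v x y := by
  simp [Om, om_smul2]; push_cast; ring

include hJ in
theorem Om_J0 (v x y : V) : Om ω J (J v) x y = I * Om ω J v x y := by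
  have hjj : J (J v) = -v := by have := LinearMap.ext_iff.1 hJ v; simpa using this
  have hneg : ω ![-v, x, y] = - ω ![v,x,y] := by
    have := om_smul0 ω (-1 : ℝ) v x y; simpa using this
  simp only [Om, hjj, hneg]
  push_cast
  linear_combination (ω ![J v, x, y] : ℂ) * Complex.I_sq

include hp hJ in
theorem Om_J1 (v x y : V) : Om ω J v (J x) y = I * Om ω J v x y := by
  have h1 : ω ![v, J x, y] = ω ![J v, x, y] := ((hp v x y).1).symm
  have h2 : ω ![J v, J x, y] = ω ![J (J v), x, y] := ((hp (J v) x y).1).symm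
  have hjj : J (J v) = -v := by have := LinearMap.ext_iff.1 hJ v; simpa using this
  have hneg : ω ![-v, x, y] = - ω ![v,x,y] := by
    have := om_smul0 ω (-1 : ℝ) v x y; simpa using this
  simp only [Om, h1, h2, hjj, hneg]
  push_cast
  linear_combination (ω ![J v, x, y] : ℂ) * Complex.I_sq

include hp hJ in
theorem Om_J2 (v x y : V) : Om ω J v x (J y) = I * Om ω J v x y := by
  have h1 : ω ![v, x, J y] = ω ![J v, x, y] := by
    rw [← (hp v x y).2, (hp v x y).1]
  have h2 : ω ![J v, x, J y] = ω ![J (J v), x, y] := by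
    rw [← (hp (J v) x y).2, (hp (J v) x y).1]
  have hjj : J (J v) = -v := by have := LinearMap.ext_iff.1 hJ v; simpa using this
  have hneg : ω ![-v, x, y] = - ω ![v,x,y] := by
    have := om_smul0 ω (-1 : ℝ) v x y; simpa using this
  simp only [Om, h1, h2, hjj, hneg]
  push_cast
  linear_combination (ω ![J v, x, y] : ℂ) * Complex.I_sq

include hp in
theorem Om_eq01 (v y : V) : Om ω J v v y = 0 := by
  have h : ω ![J v, v, y] = 0 := by
    have h1 : ω ![J v, v, y] = ω ![v, J v, y] := (hp v v y).1
    have h2 : ω ![v, J v, y] = - ω ![J v, v, y] := om_swap01 ω (J v) v y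
    linarith [h1, h2]
  simp [Om, om_eq01, h]

theorem Om_eq12 (v x : V) : Om ω J v x x = 0 := by
  simp [Om, om_eq12]

include hp in
theorem Om_eq02 (v x : V) : Om ω J v x v = 0 := by
  have h : ω ![J v, x, v] = 0 := by
    have h1 : ω ![J v, x, v] = ω ![v, x, J v] := by
      rw [(hp v x v).1, (hp v x v).2]
    have h2 : ω ![v, x, J v] = - ω ![J v, x, v] := om_swap02 ω (J v) x v
    linarith [h1, h2]
  simp [Om, om_eq02, h]

end OmDef

noncomputable section FqDef
variable {V : Type*} [AddCommGroup V]

/-- The 6-term (2,2)-shuffle wedge expression. -/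
def Fq (s t : V → V → ℂ) (a b c d : V) : ℂ :=
  s a b * t c d - s a c * t b d + s a d * t b c + s b c * t a d - s b d * t a c + s c d * t a b

theorem Fq_symm (s t : V → V → ℂ) (a b c d : V) : Fq t s a b c d = Fq s t a b c d := by
  simp only [Fq]; ring

theorem Fq_conj (s t : V → V → ℂ) (a b c d : V) :
    Fq (fun x y => (starRingEnd ℂ) (s x y)) (fun x y => (starRingEnd ℂ) (t x y)) a b c d
      = (starRingEnd ℂ) (Fq s t a b c d) := by
  simp only [Fq, map_sub, map_add, map_mul]

theorem Fq_smul_t (s t : V → V → ℂ) (c0 : ℂ) (a b c d : V) :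
    Fq s (fun x y => c0 * t x y) a b c d = c0 * Fq s t a b c d := by
  simp only [Fq]; ring

theorem Fq_re4 (s t : V → V → ℂ) (a b c d : V) :
    4 * Fq (fun x y => ((s x y).re : ℂ)) (fun x y => ((t x y).re : ℂ)) a b c d
      = Fq s t a b c d + Fq s (fun x y => (starRingEnd ℂ) (t x y)) a b c d
        + Fq (fun x y => (starRingEnd ℂ) (s x y)) t a b c d
        + Fq (fun x y => (starRingEnd ℂ) (s x y)) (fun x y => (starRingEnd ℂ) (t x y)) a b c d := by
  have re2 : ∀ z : ℂ, ((z.re : ℝ) : ℂ) = (z + (starRingEnd ℂ) z) / 2 := by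
    intro z
    rw [Complex.add_conj]
    push_cast; ring
  simp only [Fq, re2]
  ring

section Vanish
variable [Module ℂ V] [FiniteDimensional ℂ V]

theorem Fq_vanish (h3 : finrank ℂ V = 3) (s t : V → V → ℂ)
    (hsal : ∀ x x' y, s (x + x') y = s x y + s x' y)
    (hsar : ∀ x y y', s x (y + y') = s x y + s x y')
    (hssl : ∀ (c : ℂ) x y, s (c • x) y = c * s x y)
    (hssr : ∀ (c : ℂ) x y, s x (c • y) = c * s x y)
    (hs0 : ∀ x, s x x = 0)
    (htal : ∀ x x' y, t (x + x') y = t x y + t x' y)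
    (htar : ∀ x y y', t x (y + y') = t x y + t x y')
    (htsl : ∀ (c : ℂ) x y, t (c • x) y = c * t x y)
    (htsr : ∀ (c : ℂ) x y, t x (c • y) = c * t x y)
    (ht0 : ∀ x, t x x = 0)
    (x1 x2 x3 x4 : V) : Fq s t x1 x2 x3 x4 = 0 := by
  have alt_s : ∀ x y, s y x = - s x y := by
    intro x y
    have h := hs0 (x + y)
    rw [hsal, hsar, hsar, hs0, hs0] at h
    linear_combination h
  have alt_t : ∀ x y, t y x = - t x y := by
    intro x y
    have h := ht0 (x + y)
    rw [htal, htar, htar, ht0, ht0] at h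
    linear_combination h
  have R12 : ∀ a c d, Fq s t a a c d = 0 := by
    intro a c d; simp only [Fq, hs0, ht0]; ring
  have R13 : ∀ a b d, Fq s t a b a d = 0 := by
    intro a b d
    simp only [Fq, hs0, ht0]
    rw [alt_s a b, alt_t a b]; ring
  have R14 : ∀ a b c, Fq s t a b c a = 0 := by
    intro a b c
    simp only [Fq, hs0, ht0]
    rw [alt_s a c, alt_t a c, alt_s a b, alt_t a b]; ring
  have R23 : ∀ a b d, Fq s t a b b d = 0 := by
    intro a b d; simp only [Fq, hs0, ht0]; ring
  have R24 : ∀ a b c, Fq s t a b c b = 0 := by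
    intro a b c
    simp only [Fq, hs0, ht0]
    rw [alt_s b c, alt_t b c]; ring
  have R34 : ∀ a b c, Fq s t a b c c = 0 := by
    intro a b c; simp only [Fq, hs0, ht0]; ring
  have hnli : ¬ LinearIndependent ℂ ![x1, x2, x3, x4] := by
    intro h
    have hc := h.fintype_card_le_finrank
    rw [h3] at hc
    simp at hc
  obtain ⟨g, hg, k, hk⟩ := Fintype.not_linearIndependent_iff.1 hnli
  rw [Fin.sum_univ_four] at hg
  simp only [Matrix.cons_val_zero, Matrix.cons_val_one, Matrix.head_cons,
    Matrix.cons_val_two, Matrix.tail_cons, Matrix.cons_val_three] at hg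
  have hk' : g 0 ≠ 0 ∨ g 1 ≠ 0 ∨ g 2 ≠ 0 ∨ g 3 ≠ 0 := by
    fin_cases k
    · exact Or.inl hk
    · exact Or.inr (Or.inl hk)
    · exact Or.inr (Or.inr (Or.inl hk))
    · exact Or.inr (Or.inr (Or.inr hk))
  have h12 := R12 x2 x3 x4
  have h13 := R13 x3 x2 x4
  have h14 := R14 x4 x2 x3
  have h12' := R12 x1 x3 x4
  have h23 := R23 x1 x3 x4
  have h24 := R24 x1 x4 x3
  have h13' := R13 x1 x2 x4
  have h23' := R23 x1 x2 x4
  have h34 := R34 x1 x2 x4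
  have h14' := R14 x1 x2 x3
  have h24' := R24 x1 x2 x3
  have h34' := R34 x1 x2 x3
  rcases hk' with hk0 | hk0 | hk0 | hk0
  · have key : Fq s t (g 0 • x1 + g 1 • x2 + g 2 • x3 + g 3 • x4) x2 x3 x4 = 0 := by
      rw [hg]
      have hz : ∀ y, s 0 y = 0 := fun y => by
        have := hsal 0 0 y; simpa using this.symm
      have hz' : ∀ y, t 0 y = 0 := fun y => by
        have := htal 0 0 y; simpa using this.symm
      simp only [Fq, hz, hz']; ring
    have hgoal : g 0 * Fq s t x1 x2 x3 x4 = 0 := by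
      simp only [Fq, hsal, hsar, hssl, hssr, htal, htar, htsl, htsr] at key h12 h13 h14 ⊢
      linear_combination key - g 1 * h12 - g 2 * h13 - g 3 * h14
    exact (mul_eq_zero.mp hgoal).resolve_left hk0
  · have key : Fq s t x1 (g 0 • x1 + g 1 • x2 + g 2 • x3 + g 3 • x4) x3 x4 = 0 := by
      rw [hg]
      have hz : ∀ y, s y 0 = 0 := fun y => by
        have := hsar y 0 0; simpa using this.symm
      have hz' : ∀ y, t y 0 = 0 := fun y => by
        have := htar y 0 0; simpa using this.symm
      have hz2 : ∀ y, s 0 y = 0 := fun y => by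
        have := hsal 0 0 y; simpa using this.symm
      have hz2' : ∀ y, t 0 y = 0 := fun y => by
        have := htal 0 0 y; simpa using this.symm
      simp only [Fq, hz, hz', hz2, hz2']; ring
    have hgoal : g 1 * Fq s t x1 x2 x3 x4 = 0 := by
      simp only [Fq, hsal, hsar, hssl, hssr, htal, htar, htsl, htsr] at key h12' h23 h24 ⊢
      linear_combination key - g 0 * h12' - g 2 * h23 - g 3 * h24
    exact (mul_eq_zero.mp hgoal).resolve_left hk0
  · have key : Fq s t x1 x2 (g 0 • x1 + g 1 • x2 + g 2 • x3 + g 3 • x4) x4 = 0 := by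
      rw [hg]
      have hz : ∀ y, s y 0 = 0 := fun y => by
        have := hsar y 0 0; simpa using this.symm
      have hz' : ∀ y, t y 0 = 0 := fun y => by
        have := htar y 0 0; simpa using this.symm
      have hz2 : ∀ y, s 0 y = 0 := fun y => by
        have := hsal 0 0 y; simpa using this.symm
      have hz2' : ∀ y, t 0 y = 0 := fun y => by
        have := htal 0 0 y; simpa using this.symm
      simp only [Fq, hz, hz', hz2, hz2']; ring
    have hgoal : g 2 * Fq s t x1 x2 x3 x4 = 0 := by
      simp only [Fq, hsal, hsar, hssl, hssr, htal, htar, htsl, htsr] at key h13' h23' h34 ⊢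
      linear_combination key - g 0 * h13' - g 1 * h23' - g 3 * h34
    exact (mul_eq_zero.mp hgoal).resolve_left hk0
  · have key : Fq s t x1 x2 x3 (g 0 • x1 + g 1 • x2 + g 2 • x3 + g 3 • x4) = 0 := by
      rw [hg]
      have hz : ∀ y, s y 0 = 0 := fun y => by
        have := hsar y 0 0; simpa using this.symm
      have hz' : ∀ y, t y 0 = 0 := fun y => by
        have := htar y 0 0; simpa using this.symm
      simp only [Fq, hz, hz']; ring
    have hgoal : g 3 * Fq s t x1 x2 x3 x4 = 0 := by
      simp only [Fq, hsal, hsar, hssl, hssr, htal, htar, htsl, htsr] at key h14' h24' h34' ⊢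
      linear_combination key - g 0 * h14' - g 1 * h24' - g 2 * h34'
    exact (mul_eq_zero.mp hgoal).resolve_left hk0

end Vanish
end FqDef

section Tri
variable {V : Type*} [AddCommGroup V] [Module ℂ V] [FiniteDimensional ℂ V]

theorem tri_indep (T : V → V → V → ℂ)
    (ha0 : ∀ x x' b c, T (x + x') b c = T x b c + T x' b c)
    (ha1 : ∀ a x x' c, T a (x + x') c = T a x c + T a x' c)
    (ha2 : ∀ a b x x', T a b (x + x') = T a b x + T a b x')
    (hs0 : ∀ (r : ℂ) x b c, T (r • x) b c = r * T x b c)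
    (hs1 : ∀ (r : ℂ) a x c, T a (r • x) c = r * T a x c)
    (hs2 : ∀ (r : ℂ) a b x, T a b (r • x) = r * T a b x)
    (h01 : ∀ a c, T a a c = 0) (h02 : ∀ a b, T a b a = 0) (h12 : ∀ a b, T a b b = 0)
    (x y z : V) (hT : T x y z ≠ 0) : LinearIndependent ℂ ![x, y, z] := by
  by_contra hnli
  obtain ⟨g, hg, k, hk⟩ := Fintype.not_linearIndependent_iff.1 hnli
  rw [Fin.sum_univ_three] at hg
  simp only [Matrix.cons_val_zero, Matrix.cons_val_one, Matrix.head_cons,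
    Matrix.cons_val_two, Matrix.tail_cons] at hg
  have hk' : g 0 ≠ 0 ∨ g 1 ≠ 0 ∨ g 2 ≠ 0 := by
    fin_cases k
    · exact Or.inl hk
    · exact Or.inr (Or.inl hk)
    · exact Or.inr (Or.inr hk)
  rcases hk' with hk0 | hk0 | hk0
  · have key : T (g 0 • x + g 1 • y + g 2 • z) y z = 0 := by
      rw [hg]
      have hz : ∀ b c, T 0 b c = 0 := fun b c => by
        have := ha0 0 0 b c; simpa using this.symm
      exact hz y z
    rw [ha0, ha0, hs0, hs0, hs0, h01, h02 z y] at key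
    have : g 0 * T x y z = 0 := by linear_combination key
    exact hT ((mul_eq_zero.mp this).resolve_left hk0)
  · have key : T x (g 0 • x + g 1 • y + g 2 • z) z = 0 := by
      rw [hg]
      have hz : ∀ a c, T a 0 c = 0 := fun a c => by
        have := ha1 a 0 0 c; simpa using this.symm
      exact hz x z
    rw [ha1, ha1, hs1, hs1, hs1, h01, h12] at key
    have : g 1 * T x y z = 0 := by linear_combination key
    exact hT ((mul_eq_zero.mp this).resolve_left hk0)
  · have key : T x y (g 0 • x + g 1 • y + g 2 • z) = 0 := by
      rw [hg]
      have hz : ∀ a b, T a b 0 = 0 := fun a b => by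
        have := ha2 a b 0 0; simpa using this.symm
      exact hz x y
    rw [ha2, ha2, hs2, hs2, hs2, h02, h12] at key
    have : g 2 * T x y z = 0 := by linear_combination key
    exact hT ((mul_eq_zero.mp this).resolve_left hk0)
end Tri

noncomputable section OmMain
open Complex
variable {V : Type*} [AddCommGroup V] [Module ℝ V]
variable (ω : V [⋀^Fin 3]→ₗ[ℝ] ℝ) (J : V →ₗ[ℝ] V) (hJ : J ∘ₗ J = -LinearMap.id)
  (hp : ∀ v₁ v₂ v₃ : V,
      ω ![J v₁, v₂, v₃] = ω ![v₁, J v₂, v₃] ∧ ω ![v₁, J v₂, v₃] = ω ![v₁, v₂, J v₃])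

include hJ hp in
theorem Om_Fq_vanish [FiniteDimensional ℝ V] (hV : finrank ℝ V = 6) (u w : V)
    (a b c d : V) : Fq (Om ω J u) (Om ω J w) a b c d = 0 := by
  letI := cmod J hJ
  haveI : FiniteDimensional ℂ V := cmod_findim J hJ
  have h3 : finrank ℂ V = 3 := cmod_finrank hV J hJ
  have hsm : ∀ (z : V), ∀ (c : ℂ), c • z = c.re • z + c.im • J z := fun z c => cmod_smul J hJ c z
  have hbil1 : ∀ (u' : V) (c : ℂ) x y, Om ω J u' (c • x) y = c * Om ω J u' x y := by
    intro u' c x y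
    rw [hsm x c, Om_add1, Om_smulR1, Om_smulR1, Om_J1 ω J hJ hp _ _ _]
    linear_combination (Om ω J u' x y) * (Complex.re_add_im c)
  have hbil2 : ∀ (u' : V) (c : ℂ) x y, Om ω J u' x (c • y) = c * Om ω J u' x y := by
    intro u' c x y
    rw [hsm y c, Om_add2, Om_smulR2, Om_smulR2, Om_J2 ω J hJ hp _ _ _]
    linear_combination (Om ω J u' x y) * (Complex.re_add_im c)
  exact Fq_vanish h3 (Om ω J u) (Om ω J w)
    (fun x x' y => Om_add1 ω J u x x' y)
    (fun x y y' => Om_add2 ω J u x y y')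
    (fun c x y => hbil1 u c x y)
    (fun c x y => hbil2 u c x y)
    (fun x => Om_eq12 ω J u x)
    (fun x x' y => Om_add1 ω J w x x' y)
    (fun x y y' => Om_add2 ω J w x y y')
    (fun c x y => hbil1 w c x y)
    (fun c x y => hbil2 w c x y)
    (fun x => Om_eq12 ω J w x)
    a b c d

variable (J' : V →ₗ[ℝ] V) (hJ' : J' ∘ₗ J' = -LinearMap.id)
  (hp' : ∀ v₁ v₂ v₃ : V,
      ω ![J' v₁, v₂, v₃] = ω ![v₁, J' v₂, v₃] ∧ ω ![v₁, J' v₂, v₃] = ω ![v₁, v₂, J' v₃])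

include hJ hp hJ' hp' in
theorem key_re [FiniteDimensional ℝ V] (hV : finrank ℝ V = 6) (v a b c d : V) :
    (Fq (Om ω J v) (fun x y => (starRingEnd ℂ) (Om ω J (J' v) x y)) a b c d).re = 0 := by
  set w := J' v with hw
  -- common real form
  have hre : (fun x y => (((Om ω J v x y).re : ℝ) : ℂ)) = (fun x y => (((Om ω J' v x y).re : ℝ) : ℂ)) := by
    funext x y; rw [Om_re, Om_re]
  have hrew : (fun x y => (((Om ω J w x y).re : ℝ) : ℂ)) = (fun x y => (((Om ω J' w x y).re : ℝ) : ℂ)) := by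
    funext x y; rw [Om_re, Om_re]
  have hJside := Fq_re4 (Om ω J v) (Om ω J w) a b c d
  have hJ'side := Fq_re4 (Om ω J' v) (Om ω J' w) a b c d
  rw [hre, hrew] at hJside
  -- vanishing of holomorphic-holomorphic pieces
  have hv1 : Fq (Om ω J v) (Om ω J w) a b c d = 0 := Om_Fq_vanish ω J hJ hp hV v w a b c d
  have hv1' : Fq (Om ω J' v) (Om ω J' w) a b c d = 0 := Om_Fq_vanish ω J' hJ' hp' hV v w a b c d
  -- conj-conj pieces are conjugates of the above
  have hcc : Fq (fun x y => (starRingEnd ℂ) (Om ω J v x y)) (fun x y => (starRingEnd ℂ) (Om ω J w x y)) a b c d = 0 := by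
    rw [Fq_conj, hv1, map_zero]
  have hcc' : Fq (fun x y => (starRingEnd ℂ) (Om ω J' v x y)) (fun x y => (starRingEnd ℂ) (Om ω J' w x y)) a b c d = 0 := by
    rw [Fq_conj, hv1', map_zero]
  -- mixed conj pieces: Fq (conj s) t = conj (Fq s (conj t))
  have hmix : ∀ (K : V →ₗ[ℝ] V),
      Fq (fun x y => (starRingEnd ℂ) (Om ω K v x y)) (Om ω K w) a b c d
        = (starRingEnd ℂ) (Fq (Om ω K v) (fun x y => (starRingEnd ℂ) (Om ω K w x y)) a b c d) := by
    intro K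
    rw [← Fq_conj (Om ω K v) (fun x y => (starRingEnd ℂ) (Om ω K w x y))]
    congr 1
    funext x y
    simp
  -- J'-side: the mixed piece is -I * real
  have hwI : Om ω J' w = fun x y => I * Om ω J' v x y := by
    funext x y; rw [hw]; exact Om_J0 ω J' hJ' v x y
  have hr : (starRingEnd ℂ) (Fq (Om ω J' v) (fun x y => (starRingEnd ℂ) (Om ω J' v x y)) a b c d)
      = Fq (Om ω J' v) (fun x y => (starRingEnd ℂ) (Om ω J' v x y)) a b c d := by
    conv_lhs => rw [← Fq_conj (Om ω J' v) (fun x y => (starRingEnd ℂ) (Om ω J' v x y))]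
    rw [show (fun x y => (starRingEnd ℂ) ((starRingEnd ℂ) (Om ω J' v x y))) = Om ω J' v by
      funext x y; simp]
    exact Fq_symm _ _ a b c d
  set r : ℂ := Fq (Om ω J' v) (fun x y => (starRingEnd ℂ) (Om ω J' v x y)) a b c d with hrdef
  have hmixJ' : Fq (Om ω J' v) (fun x y => (starRingEnd ℂ) (Om ω J' w x y)) a b c d = -I * r := by
    rw [hwI]
    rw [show (fun x y => (starRingEnd ℂ) (I * Om ω J' v x y))
        = (fun x y => (-I) * (starRingEnd ℂ) (Om ω J' v x y)) by
      funext x y; simp]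
    rw [Fq_smul_t]
  -- conclude J'-side sum is zero
  have hJ'zero : 4 * Fq (fun x y => (((Om ω J' v x y).re : ℝ) : ℂ)) (fun x y => (((Om ω J' w x y).re : ℝ) : ℂ)) a b c d = 0 := by
    rw [hJ'side, hv1', hcc', hmixJ', hmix J', hmixJ', map_mul, map_neg, Complex.conj_I, hr]
    ring
  -- J-side
  set Z : ℂ := Fq (Om ω J v) (fun x y => (starRingEnd ℂ) (Om ω J w x y)) a b c d with hZdef
  have hsum : Z + (starRingEnd ℂ) Z = 0 := by
    have h4 : (4:ℂ) * Fq (fun x y => (((Om ω J' v x y).re : ℝ) : ℂ)) (fun x y => (((Om ω J' w x y).re : ℝ) : ℂ)) a b c d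
        = Fq (Om ω J v) (Om ω J w) a b c d + Z + (starRingEnd ℂ) Z
          + Fq (fun x y => (starRingEnd ℂ) (Om ω J v x y)) (fun x y => (starRingEnd ℂ) (Om ω J w x y)) a b c d := by
      rw [hJside, hmix J]
    rw [hJ'zero, hv1, hcc] at h4
    linear_combination -h4
  have : (2 : ℝ) * Z.re = 0 := by
    have := congrArg Complex.re hsum
    simpa [Complex.add_re, Complex.conj_re] using this
  linarith


include hJ hp hJ' hp' in
theorem colinear [FiniteDimensional ℝ V] (hV : finrank ℝ V = 6) (hΔ : Delta ω = {0})
    (v : V) (hv : v ≠ 0) : ∃ r : ℝ, J' v = r • J v := by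
  classical
  obtain ⟨x, y, hxy⟩ := exists_nonzero_val ω hΔ v hv
  letI := cmod J hJ
  haveI : FiniteDimensional ℂ V := cmod_findim J hJ
  have h3 : finrank ℂ V = 3 := cmod_finrank hV J hJ
  have hsm : ∀ (c : ℂ) (z : V), c • z = c.re • z + c.im • J z := fun c z => cmod_smul J hJ c z
  -- complex bilinearity of Om in each slot
  have hOsm0 : ∀ (c : ℂ) (u p q : V), Om ω J (c • u) p q = c * Om ω J u p q := by
    intro c u p q
    rw [hsm c u, Om_add0, Om_smulR0, Om_smulR0, Om_J0 ω J hJ]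
    linear_combination (Om ω J u p q) * (Complex.re_add_im c)
  have hOsm1 : ∀ (c : ℂ) (u p q : V), Om ω J u (c • p) q = c * Om ω J u p q := by
    intro c u p q
    rw [hsm c p, Om_add1, Om_smulR1, Om_smulR1, Om_J1 ω J hJ hp]
    linear_combination (Om ω J u p q) * (Complex.re_add_im c)
  have hOsm2 : ∀ (c : ℂ) (u p q : V), Om ω J u p (c • q) = c * Om ω J u p q := by
    intro c u p q
    rw [hsm c q, Om_add2, Om_smulR2, Om_smulR2, Om_J2 ω J hJ hp]
    linear_combination (Om ω J u p q) * (Complex.re_add_im c)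
  have hμ : Om ω J v x y ≠ 0 := by
    intro h
    apply hxy
    rw [← Om_re ω J v x y, h, Complex.zero_re]
  have hind : LinearIndependent ℂ ![v, x, y] :=
    tri_indep (Om ω J)
      (fun a a' b c => Om_add0 ω J a a' b c)
      (fun a b b' c => Om_add1 ω J a b b' c)
      (fun a b c c' => Om_add2 ω J a b c c')
      (fun r a b c => hOsm0 r a b c)
      (fun r a b c => hOsm1 r a b c)
      (fun r a b c => hOsm2 r a b c)
      (fun a c => Om_eq01 ω J hp a c)
      (fun a b => Om_eq02 ω J hp a b)
      (fun a b => Om_eq12 ω J a b)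
      v x y hμ
  have hcard : Fintype.card (Fin 3) = finrank ℂ V := by rw [h3, Fintype.card_fin]
  set e := basisOfLinearIndependentOfCardEqFinrank hind hcard with hedef
  have he : ⇑e = ![v, x, y] := coe_basisOfLinearIndependentOfCardEqFinrank hind hcard
  have he0 : e 0 = v := by rw [show e 0 = (⇑e) 0 from rfl, he]; rfl
  have he1 : e 1 = x := by rw [show e 1 = (⇑e) 1 from rfl, he]; rfl
  have he2 : e 2 = y := by rw [show e 2 = (⇑e) 2 from rfl, he]; rfl
  obtain ⟨w, hww⟩ : ∃ w, w = J' v := ⟨_, rfl⟩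
  set b0 : ℂ := e.repr w 0 with hb0def
  set b1 : ℂ := e.repr w 1 with hb1def
  set b2 : ℂ := e.repr w 2 with hb2def
  have hw : w = b0 • v + b1 • x + b2 • y := by
    have hs := e.sum_repr w
    rw [Fin.sum_univ_three, he0, he1, he2] at hs
    exact hs.symm
  have hOw : ∀ p q, Om ω J w p q
      = b0 * Om ω J v p q + b1 * Om ω J x p q + b2 * Om ω J y p q := by
    intro p q
    rw [hw, Om_add0, Om_add0, hOsm0, hOsm0, hOsm0]
  -- antisymmetry of Om
  have hA01 : ∀ p q r : V, Om ω J q p r = -Om ω J p q r := by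
    intro p q r
    have h := Om_eq01 ω J hp (p + q) r
    rw [Om_add0, Om_add1, Om_add1, Om_eq01 ω J hp, Om_eq01 ω J hp] at h
    linear_combination h
  have hA12 : ∀ p q r : V, Om ω J p r q = -Om ω J p q r := by
    intro p q r
    have h := Om_eq12 ω J p (q + r)
    rw [Om_add1, Om_add2, Om_add2, Om_eq12 ω J, Om_eq12 ω J] at h
    linear_combination h
  have hOxyv : Om ω J x y v = Om ω J v x y := by
    rw [hA12 x v y, hA01 v x y]; ring
  have hOyxv : Om ω J y x v = -Om ω J v x y := by
    rw [hA01 x y v, hOxyv]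
  -- values of Om w
  have hw_xy : Om ω J w x y = b0 * Om ω J v x y := by
    rw [hOw x y, Om_eq01 ω J hp, Om_eq02 ω J hp]; ring
  have hw_yv : Om ω J w y v = b1 * Om ω J v x y := by
    rw [hOw y v, Om_eq02 ω J hp, Om_eq01 ω J hp, hOxyv]; ring
  have hw_xv : Om ω J w x v = -(b2 * Om ω J v x y) := by
    rw [hOw x v, Om_eq02 ω J hp, Om_eq01 ω J hp, hOyxv]; ring
  have hs_yx : Om ω J v y x = -Om ω J v x y := hA12 v x y
  have hvyv : Om ω J v y v = 0 := Om_eq02 ω J hp v y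
  have hvxv : Om ω J v x v = 0 := Om_eq02 ω J hp v x
  -- the key equations
  have hkey : ∀ a b c d : V,
      (Fq (Om ω J v) (fun p q => (starRingEnd ℂ) (Om ω J w p q)) a b c d).re = 0 := by
    intro a b c d
    have h := key_re ω J hJ hp J' hJ' hp' hV v a b c d
    rwa [← hww] at h
  have hn : Complex.normSq (Om ω J v x y) ≠ 0 := by
    simpa [Complex.normSq_eq_zero] using hμ
  -- T1 : b0.re = 0
  have hb0re : b0.re = 0 := by
    have h1 := hkey x (J x) y (J y)
    have hF : Fq (Om ω J v) (fun p q => (starRingEnd ℂ) (Om ω J w p q)) x (J x) y (J y)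
        = 4 * ((Complex.normSq (Om ω J v x y) : ℝ) : ℂ) * (starRingEnd ℂ) b0 := by
      simp only [Fq, Om_J1 ω J hJ hp, Om_J2 ω J hJ hp, Om_eq12 ω J, hw_xy,
        map_mul, Complex.conj_I]
      rw [← Complex.mul_conj]
      ring_nf
      try simp only [Complex.I_sq]
      try ring_nf
    rw [hF] at h1
    have h2 : (4 * Complex.normSq (Om ω J v x y)) * b0.re = 0 := by
      simpa [Complex.mul_re, Complex.mul_im] using h1
    rcases mul_eq_zero.mp h2 with h | h
    · exact absurd h (by positivity)
    · exact h
  -- T3 : b2.re = 0 ; T2 : b2.im = 0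
  have hb2re : b2.re = 0 := by
    have h1 := hkey x (J x) y (J v)
    have hF : Fq (Om ω J v) (fun p q => (starRingEnd ℂ) (Om ω J w p q)) x (J x) y (J v)
        = -(2 * ((Complex.normSq (Om ω J v x y) : ℝ) : ℂ) * (starRingEnd ℂ) b2) := by
      simp only [Fq, Om_J1 ω J hJ hp, Om_J2 ω J hJ hp, Om_eq12 ω J, hw_xy, hw_xv, hw_yv,
        hvxv, hvyv, map_mul, map_neg, Complex.conj_I]
      rw [← Complex.mul_conj]
      ring_nf
      try simp only [Complex.I_sq]
      try ring_nf
    rw [hF] at h1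
    have h2 : (2 * Complex.normSq (Om ω J v x y)) * b2.re = 0 := by
      simpa [Complex.mul_re, Complex.mul_im] using h1
    rcases mul_eq_zero.mp h2 with h | h
    · exact absurd h (by positivity)
    · exact h
  have hb2im : b2.im = 0 := by
    have h1 := hkey x (J x) y v
    have hF : Fq (Om ω J v) (fun p q => (starRingEnd ℂ) (Om ω J w p q)) x (J x) y v
        = -(2 * Complex.I * ((Complex.normSq (Om ω J v x y) : ℝ) : ℂ) * (starRingEnd ℂ) b2) := by
      simp only [Fq, Om_J1 ω J hJ hp, Om_J2 ω J hJ hp, Om_eq12 ω J, hw_xy, hw_xv, hw_yv,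
        hvxv, hvyv, map_mul, map_neg, Complex.conj_I]
      rw [← Complex.mul_conj]
      ring_nf
      try simp only [Complex.I_sq]
      try ring_nf
    rw [hF] at h1
    have h2 : (2 * Complex.normSq (Om ω J v x y)) * b2.im = 0 := by
      simpa [Complex.mul_re, Complex.mul_im, Complex.I_re, Complex.I_im] using h1
    rcases mul_eq_zero.mp h2 with h | h
    · exact absurd h (by positivity)
    · exact h
  -- T5 : b1.re = 0 ; T4 : b1.im = 0
  have hb1re : b1.re = 0 := by
    have h1 := hkey y (J y) x (J v)
    have hF : Fq (Om ω J v) (fun p q => (starRingEnd ℂ) (Om ω J w p q)) y (J y) x (J v)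
        = -(2 * ((Complex.normSq (Om ω J v x y) : ℝ) : ℂ) * (starRingEnd ℂ) b1) := by
      simp only [Fq, Om_J1 ω J hJ hp, Om_J2 ω J hJ hp, Om_eq12 ω J, hw_xy, hw_xv, hw_yv,
        hs_yx, hvxv, hvyv, map_mul, map_neg, Complex.conj_I]
      rw [← Complex.mul_conj]
      ring_nf
      try simp only [Complex.I_sq]
      try ring_nf
    rw [hF] at h1
    have h2 : (2 * Complex.normSq (Om ω J v x y)) * b1.re = 0 := by
      simpa [Complex.mul_re, Complex.mul_im] using h1
    rcases mul_eq_zero.mp h2 with h | h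
    · exact absurd h (by positivity)
    · exact h
  have hb1im : b1.im = 0 := by
    have h1 := hkey y (J y) x v
    have hF : Fq (Om ω J v) (fun p q => (starRingEnd ℂ) (Om ω J w p q)) y (J y) x v
        = -(2 * Complex.I * ((Complex.normSq (Om ω J v x y) : ℝ) : ℂ) * (starRingEnd ℂ) b1) := by
      simp only [Fq, Om_J1 ω J hJ hp, Om_J2 ω J hJ hp, Om_eq12 ω J, hw_xy, hw_xv, hw_yv,
        hs_yx, hvxv, hvyv, map_mul, map_neg, Complex.conj_I]
      rw [← Complex.mul_conj]
      ring_nf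
      try simp only [Complex.I_sq]
      try ring_nf
    rw [hF] at h1
    have h2 : (2 * Complex.normSq (Om ω J v x y)) * b1.im = 0 := by
      simpa [Complex.mul_re, Complex.mul_im, Complex.I_re, Complex.I_im] using h1
    rcases mul_eq_zero.mp h2 with h | h
    · exact absurd h (by positivity)
    · exact h
  -- conclude
  have hb1 : b1 = 0 := Complex.ext hb1re hb1im
  have hb2 : b2 = 0 := Complex.ext hb2re hb2im
  refine ⟨b0.im, ?_⟩
  rw [← hww, hw, hb1, hb2, zero_smul, zero_smul, add_zero, add_zero, hsm b0 v, hb0re]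
  simp

end OmMain

section Eig
variable {V : Type*} [AddCommGroup V] [Module ℝ V]

theorem eigen_scalar (T : V →ₗ[ℝ] V) (v₀ : V) (hv₀ : v₀ ≠ 0)
    (h : ∀ v : V, ∃ c : ℝ, T v = c • v) : ∃ c : ℝ, ∀ v, T v = c • v := by
  classical
  obtain ⟨c₀, hc₀⟩ := h v₀
  refine ⟨c₀, fun v => ?_⟩
  by_cases hind : LinearIndependent ℝ ![v₀, v]
  · obtain ⟨cv, hcv⟩ := h v
    obtain ⟨cs, hcs⟩ := h (v₀ + v)
    have h0 : c₀ • v₀ + cv • v = cs • v₀ + cs • v := by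
      rw [← hc₀, ← hcv, ← smul_add, ← hcs, map_add]
    have h1 : (c₀ - cs) • v₀ + (cv - cs) • v = 0 := by
      rw [sub_smul, sub_smul]
      rw [show c₀ • v₀ = cs • v₀ + cs • v - cv • v by
        rw [← h0]; abel]
      abel
    obtain ⟨ha, hb⟩ := hind.eq_zero_of_pair h1
    have : cv = c₀ := by linarith [sub_eq_zero.mp ha, sub_eq_zero.mp hb]
    rw [hcv, this]
  · obtain ⟨g, hg, k, hk⟩ := Fintype.not_linearIndependent_iff.1 hind
    rw [Fin.sum_univ_two] at hg
    simp only [Matrix.cons_val_zero, Matrix.cons_val_one, Matrix.head_cons] at hg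
    by_cases h1 : g 1 = 0
    · exfalso
      have hk0 : g 0 ≠ 0 := by
        fin_cases k
        · exact hk
        · exact absurd h1 hk
      rw [h1, zero_smul, add_zero] at hg
      exact hv₀ ((smul_eq_zero.mp hg).resolve_left hk0)
    · have hv : v = (-((g 1)⁻¹ * g 0)) • v₀ := by
        have h2 : g 1 • v = -(g 0 • v₀) := eq_neg_of_add_eq_zero_right hg
        have h3 : v = (g 1)⁻¹ • (g 1 • v) := by
          rw [smul_smul, inv_mul_cancel₀ h1, one_smul]
        rw [h3, h2, smul_neg, smul_smul, neg_smul]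
      rw [hv, map_smul, hc₀, smul_smul, smul_smul, mul_comm]

end Eig

/-- **Lemma 7 (uniqueness).** If `ω` is a 3-form on a 6-dimensional real vector space `V`
with `Δ(ω) = {0}` and `J`, `J̃` are complex structures on `V` with respect to which `ω`
is pure, then `J̃ = J` or `J̃ = -J`. -/
theorem complex_structure_pure_unique_up_to_sign
    {V : Type*} [AddCommGroup V] [Module ℝ V] [FiniteDimensional ℝ V]
    (hV : Module.finrank ℝ V = 6)
    (ω : V [⋀^Fin 3]→ₗ[ℝ] ℝ) (hΔ : Delta ω = {0})
    (J J' : V →ₗ[ℝ] V)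
    (hJ : J ∘ₗ J = -LinearMap.id) (hJ' : J' ∘ₗ J' = -LinearMap.id)
    (hpure : ∀ v₁ v₂ v₃ : V,
      ω ![J v₁, v₂, v₃] = ω ![v₁, J v₂, v₃] ∧ ω ![v₁, J v₂, v₃] = ω ![v₁, v₂, J v₃])
    (hpure' : ∀ v₁ v₂ v₃ : V,
      ω ![J' v₁, v₂, v₃] = ω ![v₁, J' v₂, v₃] ∧ ω ![v₁, J' v₂, v₃] = ω ![v₁, v₂, J' v₃]) :
    J' = J ∨ J' = -J := by
  have hnt : Nontrivial V := by
    apply Module.nontrivial_of_finrank_pos (R := ℝ)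
    omega
  obtain ⟨v₀, hv₀⟩ := exists_ne (0 : V)
  have hcol : ∀ v : V, ∃ r : ℝ, J' v = r • J v := by
    intro v
    by_cases hv : v = 0
    · exact ⟨0, by simp [hv]⟩
    · exact colinear ω J hJ hpure J' hJ' hpure' hV hΔ v hv
  have heig : ∀ v : V, ∃ c : ℝ, (J ∘ₗ J') v = c • v := by
    intro v
    obtain ⟨r, hr⟩ := hcol v
    refine ⟨-r, ?_⟩
    rw [LinearMap.comp_apply, hr, map_smul, Jsq_apply J hJ, smul_neg, neg_smul]
  obtain ⟨c, hc⟩ := eigen_scalar (J ∘ₗ J') v₀ hv₀ heig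
  have hJ'eq : ∀ x : V, J' x = (-c) • J x := by
    intro x
    have h1 : J (J (J' x)) = c • J x := by
      rw [show J (J' x) = c • x from hc x, map_smul]
    rw [Jsq_apply J hJ (J' x)] at h1
    have h4 : J' x = -(c • J x) := by rw [← h1]; simp
    rw [h4, neg_smul]
  have hc2 : c ^ 2 = 1 := by
    have h2 : J' (J' v₀) = -v₀ := Jsq_apply J' hJ' v₀
    rw [hJ'eq (J' v₀), hJ'eq v₀, map_smul, Jsq_apply J hJ] at h2
    have h3 : (c ^ 2 - 1) • v₀ = 0 := by
      rw [sub_smul, one_smul, sub_eq_zero]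
      rw [show (c^2 : ℝ) • v₀ = -(-c • -c • -v₀) from by module]
      rw [h2, neg_neg]
    have := (smul_eq_zero.mp h3).resolve_right hv₀
    linarith [this]
  have : (c - 1) * (c + 1) = 0 := by ring_nf; linarith [hc2]
  rcases mul_eq_zero.mp this with h | h
  · right
    have hc1 : c = 1 := by linarith
    apply LinearMap.ext
    intro x
    rw [hJ'eq x, hc1]
    simp
  · left
    have hc1 : c = -1 := by linarith
    apply LinearMap.ext
    intro x
    rw [hJ'eq x, hc1]
    simp
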